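/- Under the assumptions of the finite-alphabet impossibility construction, any α-error Type-2 detector satisfies α ≥ ½ exp(-N²/(M-N)), where M = ⌊β|X|⌋ and N < M is the training set size. -/

import Mathlib

/-!
Let `n = |X|`, `P₀` uniform and, for each `M`-subset `S ⊆ X`, `P_S = γ • Unif(S) + (1 - γ) • P₀`;
each `P_S` is at total variation distance `1 - M/n ≥ 1 - β` from `P₀`. The average of the
`P_S^N` dominates `exp(-N²/(M-N)) • P₀^N`: expanding `∏ᵢ P_S(zᵢ)` over the set `T` of samples
drawn from `Unif(S)`, the samples in `T` lie in `S` for `C(n-d, M-d)` of the subsets, where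
`d = |z(T)|`, and `C(n-d, M-d) / C(n, M) ≥ (M/n)^d · M(M-1)⋯(M-d+1)/M^d`. The last ratio is the
probability of no collision among `d` draws from `M` items, which is at least
`((M-N)/M)^N ≥ exp(-N²/(M-N))`. Averaging the error bound of the detector over `S` therefore
gives `2α ≥ exp(-N²/(M-N)) · (P₀^N(accept) + P₀^N(reject)) ≥ exp(-N²/(M-N))`.
-/

open MeasureTheory

/-- Total variation distance between two PMFs on a finite alphabet. -/
noncomputable def tvPMF {X : Type*} [Fintype X] (P Q : PMF X) : ℝ :=
  (∑ x, |(P x).toReal - (Q x).toReal|) / 2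

open Finset Real
open scoped ENNReal

lemma Nat.choose_sub_mul_descFactorial (n M d : ℕ) (hdM : d ≤ M) :
    (n - d).choose (M - d) * n.descFactorial d = n.choose M * M.descFactorial d := by
  rw [Nat.descFactorial_eq_factorial_mul_choose, Nat.descFactorial_eq_factorial_mul_choose,
    mul_left_comm (n.choose M), Nat.choose_mul hdM]
  ring

lemma exp_neg_sq_div_mul_pow_le_descFactorial {M N d : ℕ} (hdN : d ≤ N) (hNM : N < M) :
    exp (-(N : ℝ) ^ 2 / (M - N)) * (M : ℝ) ^ d ≤ M.descFactorial d := by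
  have hNM' : (N : ℝ) < M := by exact_mod_cast hNM
  have hgap : (0 : ℝ) < M - N := sub_pos.2 hNM'
  have hM : (0 : ℝ) < M := by linarith [(N.cast_nonneg : (0 : ℝ) ≤ N)]
  have hratio : exp (-(N : ℝ) / (M - N)) ≤ (M - N) / M := by
    rw [neg_div, exp_neg, inv_le_comm₀ (exp_pos _) (div_pos hgap hM), inv_div]
    calc (M : ℝ) / (M - N) = N / (M - N) + 1 := by field_simp; ring
      _ ≤ exp (N / (M - N)) := add_one_le_exp _
  have hratio1 : ((M : ℝ) - N) / M ≤ 1 := by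
    rw [div_le_one hM]; linarith [(N.cast_nonneg : (0 : ℝ) ≤ N)]
  calc exp (-(N : ℝ) ^ 2 / (M - N)) * (M : ℝ) ^ d
      = exp (-(N : ℝ) / (M - N)) ^ N * (M : ℝ) ^ d := by
        rw [← exp_nat_mul]; ring_nf
    _ ≤ (((M : ℝ) - N) / M) ^ d * (M : ℝ) ^ d := by
        gcongr
        exact (pow_le_pow_left₀ (exp_pos _).le hratio N).trans
          (pow_le_pow_of_le_one (div_pos hgap hM).le hratio1 hdN)
    _ = ((M : ℝ) - N) ^ d := by rw [← mul_pow, div_mul_cancel₀ _ hM.ne']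
    _ ≤ ((M + 1 - d : ℕ) : ℝ) ^ d := by
        gcongr
        push_cast [show d ≤ M + 1 by omega]
        linarith [(Nat.cast_le (α := ℝ)).2 hdN]
    _ ≤ M.descFactorial d := by exact_mod_cast Nat.pow_sub_le_descFactorial M d

lemma exp_mul_choose_mul_div_pow_le {n M N d t : ℕ} {γ : ℝ} (hγ : 0 ≤ γ) (hdt : d ≤ t)
    (hdN : d ≤ N) (hNM : N < M) (hMn : M ≤ n) :
    exp (-(N : ℝ) ^ 2 / (M - N)) * n.choose M * (γ / n) ^ t
      ≤ (n - d).choose (M - d) * (γ / M) ^ t := by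
  have hM : (0 : ℝ) < M := by exact_mod_cast (N.zero_le.trans_lt hNM)
  have hn : (0 : ℝ) < n := hM.trans_le (by exact_mod_cast hMn)
  have hcount : exp (-(N : ℝ) ^ 2 / (M - N)) * n.choose M * (M : ℝ) ^ t
      ≤ (n - d).choose (M - d) * (n : ℝ) ^ t :=
    calc exp (-(N : ℝ) ^ 2 / (M - N)) * n.choose M * (M : ℝ) ^ t
        = n.choose M * (exp (-(N : ℝ) ^ 2 / (M - N)) * (M : ℝ) ^ d) * (M : ℝ) ^ (t - d) := by
          rw [← pow_sub_mul_pow (M : ℝ) hdt]; ring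
      _ ≤ n.choose M * M.descFactorial d * (M : ℝ) ^ (t - d) := by
          gcongr; exact exp_neg_sq_div_mul_pow_le_descFactorial hdN hNM
      _ = (n - d).choose (M - d) * n.descFactorial d * (M : ℝ) ^ (t - d) := by
          exact_mod_cast congrArg (· * M ^ (t - d))
            (Nat.choose_sub_mul_descFactorial n M d (hdN.trans hNM.le)).symm
      _ ≤ (n - d).choose (M - d) * (n : ℝ) ^ d * (n : ℝ) ^ (t - d) := by
          gcongr
          exact_mod_cast Nat.descFactorial_le_pow n d
      _ = (n - d).choose (M - d) * (n : ℝ) ^ t := by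
          rw [mul_assoc, ← pow_add, Nat.add_sub_cancel' hdt]
  calc exp (-(N : ℝ) ^ 2 / (M - N)) * n.choose M * (γ / n) ^ t
      = exp (-(N : ℝ) ^ 2 / (M - N)) * n.choose M * (M : ℝ) ^ t * (γ ^ t / (M ^ t * n ^ t)) := by
        rw [div_pow]; field_simp
    _ ≤ (n - d).choose (M - d) * (n : ℝ) ^ t * (γ ^ t / (M ^ t * n ^ t)) := by gcongr
    _ = (n - d).choose (M - d) * (γ / M) ^ t := by rw [div_pow]; field_simp

lemma exp_mul_choose_mul_inv_pow_le_sum_prod {X ι : Type*} [Fintype X] [DecidableEq X]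
    [Fintype ι] (z : ι → X) {M : ℕ} {γ : ℝ} (hγ0 : 0 ≤ γ) (hγ1 : γ ≤ 1)
    (hNM : Fintype.card ι < M) (hMn : M ≤ Fintype.card X) :
    exp (-(Fintype.card ι : ℝ) ^ 2 / (M - Fintype.card ι)) * (Fintype.card X).choose M
        * (1 / Fintype.card X : ℝ) ^ Fintype.card ι
      ≤ ∑ S ∈ univ.powersetCard M,
          ∏ i, ((if z i ∈ S then γ / M else 0) + (1 - γ) / Fintype.card X) := by
  classical
  set n := Fintype.card X
  set N := Fintype.card ι
  set c := exp (-(N : ℝ) ^ 2 / (M - N))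
  have hb : 0 ≤ (1 - γ) / n := div_nonneg (sub_nonneg.2 hγ1) n.cast_nonneg
  have hexpand : ∀ S : Finset X, ∏ i, ((if z i ∈ S then γ / M else 0) + (1 - γ) / n)
      = ∑ T : Finset ι, (if T.image z ⊆ S then (γ / M) ^ #T else 0) * ((1 - γ) / n) ^ (N - #T) := by
    intro S
    rw [Fintype.prod_add]
    refine sum_congr rfl fun T _ => ?_
    simp only [prod_ite_zero, prod_const, card_compl, image_subset_iff]
    rfl
  have hcount : ∀ T : Finset ι,
      ∑ S ∈ univ.powersetCard M, (if T.image z ⊆ S then (γ / M) ^ #T else 0)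
        = (n - #(T.image z)).choose (M - #(T.image z)) * (γ / M) ^ #T := by
    intro T
    have hTM : #(T.image z) ≤ M := card_image_le.trans ((card_le_univ T).trans hNM.le)
    rw [← sum_filter, sum_const, card_filter_powersetCard_subset _ _ _ (subset_univ _) hTM,
      card_univ, nsmul_eq_mul]
  calc c * n.choose M * (1 / n : ℝ) ^ N
      = ∑ T : Finset ι, c * n.choose M * ((γ / n) ^ #T * ((1 - γ) / n) ^ (N - #T)) := by
        rw [← mul_sum, Fintype.sum_pow_mul_eq_add_pow]
        congr 2
        ring
    _ ≤ ∑ T : Finset ι, (n - #(T.image z)).choose (M - #(T.image z))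
          * (γ / M) ^ #T * ((1 - γ) / n) ^ (N - #T) := by
        refine sum_le_sum fun T _ => ?_
        rw [← mul_assoc]
        exact mul_le_mul_of_nonneg_right (exp_mul_choose_mul_div_pow_le hγ0 card_image_le
          (card_image_le.trans (card_le_univ T)) hNM hMn) (pow_nonneg hb _)
    _ = ∑ S ∈ univ.powersetCard M, ∏ i, ((if z i ∈ S then γ / M else 0) + (1 - γ) / n) := by
        simp_rw [hexpand]
        rw [sum_comm]
        refine sum_congr rfl fun T _ => ?_
        rw [← sum_mul, hcount]

namespace PMF

variable {X : Type*} [Fintype X]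

noncomputable def mixture (γ : ℝ) (hγ0 : 0 ≤ γ) (hγ1 : γ ≤ 1) (P Q : PMF X) : PMF X :=
  ofFintype (fun x => ENNReal.ofReal γ * Q x + ENNReal.ofReal (1 - γ) * P x) <| by
    have hsum : ∀ R : PMF X, ∑ x, R x = 1 := fun R => by
      rw [← tsum_fintype (L := SummationFilter.unconditional X), R.tsum_coe]
    rw [sum_add_distrib, ← mul_sum, ← mul_sum, hsum, hsum, mul_one, mul_one,
      ← ENNReal.ofReal_add hγ0 (sub_nonneg.2 hγ1), add_sub_cancel, ENNReal.ofReal_one]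

lemma mixture_apply (γ : ℝ) (hγ0 : 0 ≤ γ) (hγ1 : γ ≤ 1) (P Q : PMF X) (x : X) :
    mixture γ hγ0 hγ1 P Q x = ENNReal.ofReal γ * Q x + ENNReal.ofReal (1 - γ) * P x := rfl

lemma mixture_uniformOfFinset_apply [DecidableEq X] [Nonempty X] {γ : ℝ} (hγ0 : 0 ≤ γ) (hγ1 : γ ≤ 1)
    (S : Finset X) (hS : S.Nonempty) (x : X) :
    mixture γ hγ0 hγ1 (uniformOfFintype X) (uniformOfFinset S hS) x
      = ENNReal.ofReal ((if x ∈ S then γ / #S else 0) + (1 - γ) / Fintype.card X) := by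
  have hS0 : (0 : ℝ) < #S := by exact_mod_cast hS.card_pos
  have hX0 : (0 : ℝ) < Fintype.card X := by exact_mod_cast Fintype.card_pos
  have hγ' : 0 ≤ 1 - γ := sub_nonneg.2 hγ1
  rw [mixture_apply, uniformOfFintype_apply, uniformOfFinset_apply,
    ENNReal.ofReal_add (by split_ifs <;> positivity) (by positivity), div_eq_mul_inv (1 - γ),
    ENNReal.ofReal_mul hγ', ENNReal.ofReal_inv_of_pos hX0, ENNReal.ofReal_natCast]
  split_ifs
  · rw [div_eq_mul_inv, ENNReal.ofReal_mul hγ0, ENNReal.ofReal_inv_of_pos hS0,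
      ENNReal.ofReal_natCast]
  · simp

lemma tvPMF_uniformOfFintype_uniformOfFinset [DecidableEq X] [Nonempty X] (S : Finset X)
    (hS : S.Nonempty) :
    tvPMF (uniformOfFintype X) (uniformOfFinset S hS) = 1 - #S / Fintype.card X := by
  have hS0 : (0 : ℝ) < #S := by exact_mod_cast hS.card_pos
  have hSX : (#S : ℝ) ≤ Fintype.card X := by exact_mod_cast card_le_univ S
  have hin : ∀ x ∈ S, |((uniformOfFintype X) x).toReal - ((uniformOfFinset S hS) x).toReal|
      = (#S : ℝ)⁻¹ - (Fintype.card X : ℝ)⁻¹ := fun x hx => by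
    rw [uniformOfFintype_apply, uniformOfFinset_apply_of_mem (hs := hS) hx, ENNReal.toReal_inv,
      ENNReal.toReal_inv, ENNReal.toReal_natCast, ENNReal.toReal_natCast, abs_sub_comm,
      abs_of_nonneg (sub_nonneg.2 (inv_anti₀ hS0 hSX))]
  have hout : ∀ x ∈ Sᶜ, |((uniformOfFintype X) x).toReal - ((uniformOfFinset S hS) x).toReal|
      = (Fintype.card X : ℝ)⁻¹ := fun x hx => by
    rw [uniformOfFintype_apply, uniformOfFinset_apply_of_notMem (hs := hS) (mem_compl.1 hx)]
    simp
  rw [tvPMF, ← sum_add_sum_compl S, sum_congr rfl hin, sum_congr rfl hout, sum_const, sum_const,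
    card_compl, nsmul_eq_mul, nsmul_eq_mul, Nat.cast_sub (card_le_univ S)]
  field_simp
  ring

end PMF

namespace MeasureTheory.Measure

lemma le_of_forall_singleton_le {α : Type*} [Finite α] [MeasurableSpace α]
    [MeasurableSingletonClass α] {μ ν : Measure α} (h : ∀ a, μ {a} ≤ ν {a}) : μ ≤ ν := by
  refine le_iff'.2 fun s => ?_
  rw [← s.toFinite.coe_toFinset, ← sum_measure_singleton, ← sum_measure_singleton]
  exact sum_le_sum fun a _ => h a

lemma finsetSum_prod {α β ι : Type*} [MeasurableSpace α] [MeasurableSpace β] (s : Finset ι)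
    (μ : ι → Measure α) [∀ i, IsFiniteMeasure (μ i)] (ν : Measure β) [SFinite ν] :
    (∑ i ∈ s, μ i).prod ν = ∑ i ∈ s, (μ i).prod ν := by
  classical
  induction s using Finset.induction_on with
  | empty => simp
  | insert i s hi ih => rw [sum_insert hi, sum_insert hi, add_prod, ih]

end MeasureTheory.Measure

lemma PMF.pi_toMeasure_singleton {ι X : Type*} [Fintype ι] [MeasurableSpace X]
    [MeasurableSingletonClass X] (P : PMF X) (z : ι → X) :
    Measure.pi (fun _ : ι => P.toMeasure) {z} = ∏ i, P (z i) := by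
  simp [PMF.toMeasure_apply_singleton]

lemma half_mul_le_of_smul_le_sum {Ω ι : Type*} [MeasurableSpace Ω] {μ₀ : Measure Ω}
    [IsProbabilityMeasure μ₀] {μ : ι → Measure Ω} [∀ i, IsFiniteMeasure (μ i)] {s : Finset ι}
    (hs : s.Nonempty) {c α : ℝ} (hc0 : 0 ≤ c) (hc1 : c ≤ 1)
    (hmix : ENNReal.ofReal (c * #s) • μ₀ ≤ ∑ i ∈ s, μ i) (E : Set Ω)
    (herr : ∀ i ∈ s, 1 / 2 * (μ i E).toReal + 1 / 2 * (μ₀ Eᶜ).toReal ≤ α) :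
    1 / 2 * c ≤ α := by
  have hs0 : (0 : ℝ) < #s := by exact_mod_cast hs.card_pos
  have hdom : c * #s * (μ₀ E).toReal ≤ ∑ i ∈ s, (μ i E).toReal := by
    have h := ENNReal.toReal_mono (by simp [measure_ne_top]) (Measure.le_iff'.1 hmix E)
    rwa [Measure.smul_apply, smul_eq_mul, ENNReal.toReal_mul,
      ENNReal.toReal_ofReal (by positivity), Measure.finsetSum_apply,
      ENNReal.toReal_sum fun i _ => measure_ne_top _ _] at h
  have hcover : 1 ≤ (μ₀ E).toReal + (μ₀ Eᶜ).toReal := by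
    have h := measureReal_union_le (μ := μ₀) E Eᶜ
    rwa [Set.union_compl_self, probReal_univ] at h
  have herr_sum := sum_le_sum herr
  rw [sum_add_distrib, ← mul_sum, sum_const, nsmul_eq_mul, sum_const, nsmul_eq_mul] at herr_sum
  have hcompl_nonneg : 0 ≤ (μ₀ Eᶜ).toReal := ENNReal.toReal_nonneg
  nlinarith [mul_le_mul_of_nonneg_left hcover (mul_nonneg hc0 hs0.le),
    mul_le_mul_of_nonneg_right hc1 (mul_nonneg hs0.le hcompl_nonneg)]

lemma smul_pi_uniformOfFintype_le_sum_pi_mixture {X ι : Type*} [Fintype X] [DecidableEq X]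
    [Nonempty X] [MeasurableSpace X] [MeasurableSingletonClass X] [Fintype ι] {M : ℕ} {γ : ℝ}
    (hγ0 : 0 ≤ γ) (hγ1 : γ ≤ 1) (hNM : Fintype.card ι < M) (hMn : M ≤ Fintype.card X)
    (Q : Finset X → PMF X) (hQ : ∀ S (hS : S.Nonempty), Q S = PMF.uniformOfFinset S hS) :
    ENNReal.ofReal (exp (-(Fintype.card ι : ℝ) ^ 2 / (M - Fintype.card ι))
        * (Fintype.card X).choose M) • Measure.pi (fun _ : ι => (PMF.uniformOfFintype X).toMeasure)
      ≤ ∑ S ∈ univ.powersetCard M,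
          Measure.pi fun _ : ι =>
            (PMF.mixture γ hγ0 hγ1 (PMF.uniformOfFintype X) (Q S)).toMeasure := by
  refine Measure.le_of_forall_singleton_le fun z => ?_
  have hX0 : (0 : ℝ) < Fintype.card X := by exact_mod_cast Fintype.card_pos
  have hmass_nonneg : ∀ (S : Finset X) (x : X),
      0 ≤ (if x ∈ S then γ / M else 0) + (1 - γ) / Fintype.card X := fun S x =>
    add_nonneg (by split_ifs <;> positivity) (div_nonneg (sub_nonneg.2 hγ1) hX0.le)
  have hnull : Measure.pi (fun _ : ι => (PMF.uniformOfFintype X).toMeasure) {z}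
      = ENNReal.ofReal ((1 / Fintype.card X : ℝ) ^ Fintype.card ι) := by
    rw [PMF.pi_toMeasure_singleton, ENNReal.ofReal_pow (by positivity), one_div,
      ENNReal.ofReal_inv_of_pos hX0, ENNReal.ofReal_natCast]
    simp [PMF.uniformOfFintype_apply]
  have hcontaminated : ∀ S ∈ univ.powersetCard M,
      Measure.pi (fun _ : ι => (PMF.mixture γ hγ0 hγ1 (PMF.uniformOfFintype X) (Q S)).toMeasure) {z}
        = ENNReal.ofReal (∏ i, ((if z i ∈ S then γ / M else 0) + (1 - γ) / Fintype.card X)) := by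
    intro S hS
    have hScard : #S = M := (mem_powersetCard.1 hS).2
    have hSne : S.Nonempty := card_pos.1 (by omega)
    rw [PMF.pi_toMeasure_singleton, hQ S hSne,
      ENNReal.ofReal_prod_of_nonneg fun i _ => hmass_nonneg S (z i)]
    simp only [PMF.mixture_uniformOfFinset_apply, hScard]
  rw [Measure.smul_apply, smul_eq_mul, hnull, ← ENNReal.ofReal_mul (by positivity),
    Measure.finsetSum_apply, sum_congr rfl hcontaminated,
    ← ENNReal.ofReal_sum_of_nonneg fun S _ => prod_nonneg fun i _ => hmass_nonneg S (z i)]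
  exact ENNReal.ofReal_le_ofReal (exp_mul_choose_mul_inv_pow_le_sum_prod z hγ0 hγ1 hNM hMn)

theorem stmt13_general {X Ω : Type*} [Fintype X] [MeasurableSpace X] [MeasurableSingletonClass X]
    [MeasurableSpace Ω] (μΩ : Measure Ω) [IsProbabilityMeasure μΩ]
    (N : ℕ) (γ β α : ℝ) (hγ0 : 0 < γ) (hγ1 : γ ≤ 1) (hβ0 : 0 ≤ β) (hβ1 : β ≤ 1)
    (hNM : N < Nat.floor (β * Fintype.card X))
    (g : (Fin N → X) → PMF X → Ω → Bool)
    (hdet : ∀ P₀ Pb P₁ : PMF X,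
      (∀ x, P₁ x = ENNReal.ofReal γ * Pb x + ENNReal.ofReal (1 - γ) * P₀ x) →
      1 - β ≤ tvPMF P₀ Pb →
      1 / 2 * (((Measure.pi fun _ : Fin N => P₁.toMeasure).prod μΩ)
          {q | g q.1 P₀ q.2 = false}).toReal +
      1 / 2 * (((Measure.pi fun _ : Fin N => P₀.toMeasure).prod μΩ)
          {q | g q.1 P₀ q.2 = true}).toReal ≤ α) :
    α ≥ 1 / 2 * Real.exp (-(N : ℝ) ^ 2 /
      ((Nat.floor (β * Fintype.card X) : ℝ) - N)) := by
  classical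
  set n := Fintype.card X
  set M := ⌊β * n⌋₊
  have hMβ : (M : ℝ) ≤ β * n := Nat.floor_le (by positivity)
  have hMn : M ≤ n := by
    have : (M : ℝ) ≤ n := hMβ.trans (mul_le_of_le_one_left n.cast_nonneg hβ1)
    exact_mod_cast this
  have : Nonempty X := Fintype.card_pos_iff.1 (by omega)
  set P₀ := PMF.uniformOfFintype X
  set Q : Finset X → PMF X := fun S => if h : S.Nonempty then PMF.uniformOfFinset S h else P₀
  have hQ : ∀ S (hS : S.Nonempty), Q S = PMF.uniformOfFinset S hS := fun S hS => dif_pos hS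
  have hmix := smul_pi_uniformOfFintype_le_sum_pi_mixture (ι := Fin N) hγ0.le hγ1
    (by rwa [Fintype.card_fin]) hMn Q hQ
  rw [Fintype.card_fin] at hmix
  refine ge_iff_le.2 (half_mul_le_of_smul_le_sum
    (μ₀ := (Measure.pi fun _ : Fin N => P₀.toMeasure).prod μΩ)
    (μ := fun S =>
      (Measure.pi fun _ : Fin N => (PMF.mixture γ hγ0.le hγ1 P₀ (Q S)).toMeasure).prod μΩ)
    (s := univ.powersetCard M) (powersetCard_nonempty.2 (by rwa [card_univ])) (exp_nonneg _) ?_ ?_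
    {q | g q.1 P₀ q.2 = false} fun S hS => ?_)
  · exact exp_le_one_iff.2 (div_nonpos_of_nonpos_of_nonneg (neg_nonpos.2 (sq_nonneg _))
      (sub_nonneg.2 (by exact_mod_cast hNM.le)))
  · rw [card_powersetCard, card_univ, ← Measure.prod_smul_left, ← Measure.finsetSum_prod]
    exact Measure.prod_mono hmix le_rfl
  · have hSne : S.Nonempty := card_pos.1 (by rw [(mem_powersetCard.1 hS).2]; omega)
    have htv : 1 - β ≤ tvPMF P₀ (Q S) := by
      rw [hQ S hSne, PMF.tvPMF_uniformOfFintype_uniformOfFinset, (mem_powersetCard.1 hS).2]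
      rw [le_sub_comm, sub_sub_cancel, div_le_iff₀ (by exact_mod_cast Fintype.card_pos)]
      exact hMβ
    have h := hdet P₀ (Q S) _ (PMF.mixture_apply γ hγ0.le hγ1 P₀ (Q S)) htv
    simpa only [Set.compl_ofPred, Bool.not_eq_false] using h

/-- Impossibility: any α-error Type-2 detector (receiving the dataset and the clean
distribution P₀, possibly randomized via Ω) over P = {(P₀,P_b) : TV ≥ 1-β}
satisfies α ≥ ½ exp(-N²/(M-N)), where M = ⌊β|X|⌋ and N < M. -/
theorem stmt13 {X Ω : Type*} [Fintype X] [MeasurableSpace X] [MeasurableSingletonClass X]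
    [MeasurableSpace Ω] (μΩ : Measure Ω) [IsProbabilityMeasure μΩ]
    (N : ℕ) (γ β α : ℝ) (hγ0 : 0 < γ) (hγ1 : γ ≤ 1) (hβ0 : 0 ≤ β) (hβ1 : β ≤ 1)
    (hα0 : 0 < α) (hα1 : α ≤ 1 / 2)
    (hNM : N < Nat.floor (β * Fintype.card X))
    (g : (Fin N → X) → PMF X → Ω → Bool)
    (hdet : ∀ P₀ Pb P₁ : PMF X,
      (∀ x, P₁ x = ENNReal.ofReal γ * Pb x + ENNReal.ofReal (1 - γ) * P₀ x) →
      1 - β ≤ tvPMF P₀ Pb →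
      1 / 2 * (((Measure.pi fun _ : Fin N => P₁.toMeasure).prod μΩ)
          {q | g q.1 P₀ q.2 = false}).toReal +
      1 / 2 * (((Measure.pi fun _ : Fin N => P₀.toMeasure).prod μΩ)
          {q | g q.1 P₀ q.2 = true}).toReal ≤ α) :
    α ≥ 1 / 2 * Real.exp (-(N : ℝ) ^ 2 /
      ((Nat.floor (β * Fintype.card X) : ℝ) - N)) :=
  stmt13_general μΩ N γ β α hγ0 hγ1 hβ0 hβ1 hNM g hdet
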